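/- (Generalized passivity theorem with offsets) Assume γ(ρ⁻¹∘H₁∘ρ) < ∞ and there are constants δ₁, δ₂, β₁', β₂' with δ₁ + δ₂ > 0 such that ⟨x,(ρ⁻¹∘H₁∘ρ)x⟩_T ≥ δ₁‖x‖_T² + β₁' and ⟨x,(ρ∘H₂∘ρ⁻¹)x⟩_T ≥ δ₂‖(ρ∘H₂∘ρ⁻¹)x‖_T² + β₂' for all x ∈ S_e^n, T. Then for the well-posed feedback loop with inputs u₁, u₂ ∈ S^n, the internal signals e₁, e₂, y₁, y₂ all belong to S^n. -/

import Mathlib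

noncomputable section

variable {E : Type*} [NormedAddCommGroup E] [InnerProductSpace ℝ E]

/-- Truncation operator `P_T`. -/
def trunc (T : ℤ) (x : ℤ → E) : ℤ → E := fun t => if t ≤ T then x t else 0

/-- Membership in the extended signal space `S_e^n`: left-bounded support. -/
def SeP (x : ℤ → E) : Prop := ∃ a : ℤ, ∀ t, t < a → x t = 0

/-- Truncated inner product. -/
def innerT (T : ℤ) (x y : ℤ → E) : ℝ := ∑' t : ℤ, (inner ℝ (trunc T x t) (trunc T y t) : ℝ)

/-- Truncated norm `‖x‖_T`. -/
def normT (T : ℤ) (x : ℤ → E) : ℝ := Real.sqrt (innerT T x x)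

/-- Membership in `S^n`: an extended-space signal with uniformly bounded truncated norms. -/
def memS (x : ℤ → E) : Prop := SeP x ∧ ∃ M : ℝ, ∀ T : ℤ, normT T x ≤ M

/-- The action of `ρ > 0` on signals: `(ρ ∘ x)(t) = ρᵗ x(t)`. -/
def rhoAct (ρ : ℝ) (x : ℤ → E) : ℤ → E := fun t => ρ ^ t • x t

/-- The direct-chain operator `ρ⁻¹ ∘ H₁ ∘ ρ`. -/
def dirOp (ρ : ℝ) (H1 : (ℤ → E) → (ℤ → E)) : (ℤ → E) → (ℤ → E) :=
  fun x => rhoAct ρ⁻¹ (H1 (rhoAct ρ x))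

/-- The feedback-chain operator `ρ ∘ H₂ ∘ ρ⁻¹`. -/
def fbOp (ρ : ℝ) (H2 : (ℤ → E) → (ℤ → E)) : (ℤ → E) → (ℤ → E) :=
  fun x => rhoAct ρ (H2 (rhoAct ρ⁻¹ x))

/-- The set whose infimum is the unbiased gain `γ⁰(H)`. -/
def gainSet (H : (ℤ → E) → (ℤ → E)) : Set ℝ :=
  {δ : ℝ | 0 ≤ δ ∧ ∀ x, SeP x → ∀ T : ℤ, normT T (H x) ≤ δ * normT T x}

/-- The set whose infimum is the biased gain `γ(H)`. -/
def gainSetB (H : (ℤ → E) → (ℤ → E)) : Set ℝ :=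
  {δ : ℝ | 0 ≤ δ ∧ ∃ β : ℝ, ∀ x, SeP x → ∀ T : ℤ, normT T (H x) ≤ δ * normT T x + β}

/-!
The loop equations make the cross terms cancel: `⟨e₁, y₁⟩ + ⟨e₂, y₂⟩ = ⟨u₁, y₁⟩ + ⟨u₂, y₂⟩`.
The passivity bounds estimate the left side from below by `δ₁‖e₁‖² + δ₂‖y₂‖²` up to constants,
and the finite gain of the direct chain estimates the right side from above by a linear
function of `‖e₁‖`. As `y₂ = u₁ - e₁`, `‖y₂‖` differs from `‖e₁‖` by at most `sup ‖u₁‖`, so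
`(δ₁ + δ₂)‖e₁‖_T²` is bounded by an affine function of `‖e₁‖_T` with coefficients independent
of `T`. Hence `e₁` is bounded in every truncated norm, and so are `y₁`, `e₂ = u₂ + y₁` and
`y₂ = u₁ - e₁`. For a fixed `T` the truncated quantities live in the finite-dimensional
inner product space `E^{[a, T]}`, where `a` is a common lower bound of the supports.
-/

section RealEstimates

lemma le_max_one_div_of_mul_sq_le {k A C s : ℝ} (hk : 0 < k)
    (h : k * s ^ 2 ≤ A * s + C) : s ≤ max 1 ((A + |C|) / k) := by
  rcases le_or_gt s 1 with h1 | h1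
  · exact le_max_of_le_left h1
  · refine le_max_of_le_right ?_
    rw [le_div_iff₀ hk]
    nlinarith [le_abs_self C, mul_nonneg (abs_nonneg C) (by linarith : (0:ℝ) ≤ s - 1)]

lemma abs_sq_sub_sq_le {s t M : ℝ} (hs : 0 ≤ s) (h : |t - s| ≤ M) :
    |t ^ 2 - s ^ 2| ≤ M * (2 * s + M) := by
  have hM : 0 ≤ M := (abs_nonneg _).trans h
  calc |t ^ 2 - s ^ 2| = |t - s| * |(t - s) + 2 * s| := by rw [← abs_mul]; ring_nf
    _ ≤ M * (M + 2 * s) := by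
        gcongr
        calc |(t - s) + 2 * s| ≤ |t - s| + |2 * s| := abs_add_le _ _
          _ ≤ M + 2 * s := by rw [abs_of_nonneg (by positivity : 0 ≤ 2 * s)]; linarith
    _ = M * (2 * s + M) := by ring

end RealEstimates

section InnerProductSpace

variable {F : Type*} [NormedAddCommGroup F] [InnerProductSpace ℝ F]

lemma inner_add_inner_eq_of_loop {u₁ u₂ e₁ e₂ y₁ y₂ : F} (h₁ : e₁ = u₁ - y₂)
    (h₂ : e₂ = u₂ + y₁) :
    inner ℝ e₁ y₁ + inner ℝ e₂ y₂ = inner ℝ u₁ y₁ + inner ℝ u₂ y₂ := by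
  rw [h₁, h₂, inner_sub_left, inner_add_left, real_inner_comm y₂ y₁]
  ring

/-- `max 1 ((A + |C|) / (δ₁ + δ₂))`, where `(δ₁ + δ₂) s² ≤ A s + C` is the quadratic inequality
satisfied by `s = ‖e₁‖`. -/
def passivityBound (δ₁ δ₂ β₁ β₂ M g β : ℝ) : ℝ :=
  max 1 ((M * g + M + 2 * |δ₂| * M + |M * β + M ^ 2 + |δ₂| * M ^ 2 - β₁ - β₂|) / (δ₁ + δ₂))

lemma norm_le_passivityBound {u₁ u₂ e₁ e₂ y₁ y₂ : F} {δ₁ δ₂ β₁ β₂ M g β : ℝ}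
    (hδ : 0 < δ₁ + δ₂) (hu₁ : ‖u₁‖ ≤ M) (hu₂ : ‖u₂‖ ≤ M)
    (h₁ : e₁ = u₁ - y₂) (h₂ : e₂ = u₂ + y₁) (hgain : ‖y₁‖ ≤ g * ‖e₁‖ + β)
    (hpass₁ : δ₁ * ‖e₁‖ ^ 2 + β₁ ≤ inner ℝ e₁ y₁)
    (hpass₂ : δ₂ * ‖y₂‖ ^ 2 + β₂ ≤ inner ℝ e₂ y₂) :
    ‖e₁‖ ≤ passivityBound δ₁ δ₂ β₁ β₂ M g β := by
  set s := ‖e₁‖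
  set t := ‖y₂‖
  have hM : 0 ≤ M := (norm_nonneg _).trans hu₁
  have hy₂ : y₂ = u₁ - e₁ := by rw [h₁, sub_sub_cancel]
  have hts : |t - s| ≤ M := abs_sub_le_iff.2
    ⟨by linarith [hy₂ ▸ norm_sub_le u₁ e₁], by linarith [h₁ ▸ norm_sub_le u₁ y₂]⟩
  have hq₁ : inner ℝ u₁ y₁ ≤ M * (g * s + β) :=
    (real_inner_le_norm _ _).trans (mul_le_mul hu₁ hgain (norm_nonneg _) hM)
  have hq₂ : inner ℝ u₂ y₂ ≤ M * t :=
    (real_inner_le_norm _ _).trans (mul_le_mul_of_nonneg_right hu₂ (norm_nonneg _))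
  have hMt : M * t ≤ M * s + M ^ 2 := by
    nlinarith [mul_le_mul_of_nonneg_left (abs_sub_le_iff.1 hts).1 hM]
  have hδ₂ : -(|δ₂| * (M * (2 * s + M))) ≤ δ₂ * (t ^ 2 - s ^ 2) := by
    calc -(|δ₂| * (M * (2 * s + M))) ≤ -(|δ₂| * |t ^ 2 - s ^ 2|) :=
          neg_le_neg (mul_le_mul_of_nonneg_left (abs_sq_sub_sq_le (norm_nonneg _) hts)
            (abs_nonneg _))
      _ = -|δ₂ * (t ^ 2 - s ^ 2)| := by rw [abs_mul]
      _ ≤ δ₂ * (t ^ 2 - s ^ 2) := neg_abs_le _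
  refine le_max_one_div_of_mul_sq_le hδ ?_
  linarith [inner_add_inner_eq_of_loop h₁ h₂]

end InnerProductSpace

section Signals

omit [InnerProductSpace ℝ E] in
lemma SeP.add {x y : ℤ → E} (hx : SeP x) (hy : SeP y) : SeP (x + y) := by
  obtain ⟨a, ha⟩ := hx
  obtain ⟨b, hb⟩ := hy
  exact ⟨min a b, fun t ht => by
    simp [ha t (ht.trans_le (min_le_left _ _)), hb t (ht.trans_le (min_le_right _ _))]⟩

omit [InnerProductSpace ℝ E] in
lemma SeP.sub {x y : ℤ → E} (hx : SeP x) (hy : SeP y) : SeP (x - y) := by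
  obtain ⟨a, ha⟩ := hx
  obtain ⟨b, hb⟩ := hy
  exact ⟨min a b, fun t ht => by
    simp [ha t (ht.trans_le (min_le_left _ _)), hb t (ht.trans_le (min_le_right _ _))]⟩

omit [InnerProductSpace ℝ E] in
lemma exists_forall_eq_zero_of_finite {s : Set (ℤ → E)} (hs : s.Finite) (h : ∀ x ∈ s, SeP x) :
    ∃ a : ℤ, ∀ x ∈ s, ∀ t, t < a → x t = 0 := by
  choose! f hf using h
  obtain ⟨a, ha⟩ := (hs.image f).bddBelow
  exact ⟨a, fun x hx t ht => hf x hx t (ht.trans_le (ha ⟨x, hx, rfl⟩))⟩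

def truncVec (a T : ℤ) (x : ℤ → E) : PiLp 2 (fun _ : Finset.Icc a T => E) :=
  WithLp.toLp 2 fun i => x i

omit [InnerProductSpace ℝ E] in
lemma truncVec_add (a T : ℤ) (x y : ℤ → E) :
    truncVec a T (x + y) = truncVec a T x + truncVec a T y := rfl

omit [InnerProductSpace ℝ E] in
lemma truncVec_sub (a T : ℤ) (x y : ℤ → E) :
    truncVec a T (x - y) = truncVec a T x - truncVec a T y := rfl

lemma innerT_eq_inner_truncVec {a T : ℤ} {x : ℤ → E} (hx : ∀ t, t < a → x t = 0) (y : ℤ → E) :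
    innerT T x y = inner ℝ (truncVec a T x) (truncVec a T y) := by
  have h0 : ∀ t ∉ Finset.Icc a T, inner ℝ (trunc T x t) (trunc T y t) = 0 := by
    intro t ht
    rw [Finset.mem_Icc, not_and_or, not_le, not_le] at ht
    rcases ht with h | h
    · simp [trunc, hx t h]
    · simp [trunc, h.not_ge]
  rw [innerT, tsum_eq_sum h0, PiLp.inner_apply, ← Finset.sum_coe_sort]
  refine Finset.sum_congr rfl fun i _ => ?_
  simp [trunc, truncVec, (Finset.mem_Icc.1 i.2).2]

lemma normT_eq_norm_truncVec {a T : ℤ} {x : ℤ → E} (hx : ∀ t, t < a → x t = 0) :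
    normT T x = ‖truncVec a T x‖ := by
  rw [normT, innerT_eq_inner_truncVec hx, real_inner_self_eq_norm_sq, Real.sqrt_sq (norm_nonneg _)]

lemma normT_add_le {x y : ℤ → E} (hx : SeP x) (hy : SeP y) (T : ℤ) :
    normT T (x + y) ≤ normT T x + normT T y := by
  obtain ⟨a, ha⟩ := exists_forall_eq_zero_of_finite (Set.toFinite {x, y}) (by simp [hx, hy])
  have hxy : ∀ t, t < a → (x + y) t = 0 := fun t ht => by
    simp [ha x (by simp) t ht, ha y (by simp) t ht]
  rw [normT_eq_norm_truncVec hxy, normT_eq_norm_truncVec (ha x (by simp)),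
    normT_eq_norm_truncVec (ha y (by simp)), truncVec_add]
  exact norm_add_le _ _

lemma normT_sub_le {x y : ℤ → E} (hx : SeP x) (hy : SeP y) (T : ℤ) :
    normT T (x - y) ≤ normT T x + normT T y := by
  obtain ⟨a, ha⟩ := exists_forall_eq_zero_of_finite (Set.toFinite {x, y}) (by simp [hx, hy])
  have hxy : ∀ t, t < a → (x - y) t = 0 := fun t ht => by
    simp [ha x (by simp) t ht, ha y (by simp) t ht]
  rw [normT_eq_norm_truncVec hxy, normT_eq_norm_truncVec (ha x (by simp)),
    normT_eq_norm_truncVec (ha y (by simp)), truncVec_sub]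
  exact norm_sub_le _ _

lemma memS.add {x y : ℤ → E} (hx : memS x) (hy : memS y) : memS (x + y) := by
  obtain ⟨hxS, M, hM⟩ := hx
  obtain ⟨hyS, N, hN⟩ := hy
  exact ⟨hxS.add hyS, M + N, fun T => (normT_add_le hxS hyS T).trans (add_le_add (hM T) (hN T))⟩

lemma memS.sub {x y : ℤ → E} (hx : memS x) (hy : memS y) : memS (x - y) := by
  obtain ⟨hxS, M, hM⟩ := hx
  obtain ⟨hyS, N, hN⟩ := hy
  exact ⟨hxS.sub hyS, M + N, fun T => (normT_sub_le hxS hyS T).trans (add_le_add (hM T) (hN T))⟩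

lemma normT_le_passivityBound {u₁ u₂ e₁ e₂ y₁ y₂ : ℤ → E} {δ₁ δ₂ β₁ β₂ M g β : ℝ} {T : ℤ}
    (hu₁S : SeP u₁) (hu₂S : SeP u₂) (he₁S : SeP e₁) (he₂S : SeP e₂)
    (hδ : 0 < δ₁ + δ₂) (hu₁ : normT T u₁ ≤ M) (hu₂ : normT T u₂ ≤ M)
    (h₁ : e₁ = u₁ - y₂) (h₂ : e₂ = u₂ + y₁) (hgain : normT T y₁ ≤ g * normT T e₁ + β)
    (hpass₁ : δ₁ * normT T e₁ ^ 2 + β₁ ≤ innerT T e₁ y₁)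
    (hpass₂ : δ₂ * normT T y₂ ^ 2 + β₂ ≤ innerT T e₂ y₂) :
    normT T e₁ ≤ passivityBound δ₁ δ₂ β₁ β₂ M g β := by
  obtain ⟨a, ha⟩ := exists_forall_eq_zero_of_finite (Set.toFinite {u₁, u₂, e₁, e₂})
    (by simp [hu₁S, hu₂S, he₁S, he₂S])
  have hy₁ : ∀ t, t < a → y₁ t = 0 := fun t ht => by
    simpa [ha u₂ (by simp) t ht, ha e₂ (by simp) t ht] using (congrFun h₂ t).symm
  have hy₂ : ∀ t, t < a → y₂ t = 0 := fun t ht => by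
    simpa [ha u₁ (by simp) t ht, ha e₁ (by simp) t ht] using (congrFun h₁ t).symm
  simp only [normT_eq_norm_truncVec (ha _ (by simp : u₁ ∈ _)),
    normT_eq_norm_truncVec (ha _ (by simp : u₂ ∈ _)),
    normT_eq_norm_truncVec (ha _ (by simp : e₁ ∈ _)),
    normT_eq_norm_truncVec hy₁, normT_eq_norm_truncVec hy₂,
    innerT_eq_inner_truncVec (ha _ (by simp : e₁ ∈ _)),
    innerT_eq_inner_truncVec (ha _ (by simp : e₂ ∈ _))] at *
  exact norm_le_passivityBound hδ hu₁ hu₂ (by rw [h₁, truncVec_sub]) (by rw [h₂, truncVec_add])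
    hgain hpass₁ hpass₂

end Signals

theorem stmt11_general (ρ : ℝ) (H1 H2 : (ℤ → E) → (ℤ → E))
    (δ1 δ2 β1' β2' : ℝ) (hδ : 0 < δ1 + δ2)
    (hg1 : (gainSetB (dirOp ρ H1)).Nonempty)
    (hpass1 : ∀ x, SeP x → ∀ T : ℤ,
      innerT T x (dirOp ρ H1 x) ≥ δ1 * normT T x ^ 2 + β1')
    (hpass2 : ∀ x, SeP x → ∀ T : ℤ,
      innerT T x (fbOp ρ H2 x) ≥ δ2 * normT T (fbOp ρ H2 x) ^ 2 + β2')
    (u1 u2 e1 e2 : ℤ → E)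
    (hu1 : memS u1) (hu2 : memS u2) (he1 : SeP e1) (he2 : SeP e2)
    (hloop1 : e1 = u1 - fbOp ρ H2 e2) (hloop2 : e2 = u2 + dirOp ρ H1 e1) :
    memS e1 ∧ memS e2 ∧ memS (dirOp ρ H1 e1) ∧ memS (fbOp ρ H2 e2) := by
  obtain ⟨g, hg, β, hgain⟩ := hg1
  obtain ⟨M₁, hM₁⟩ := hu1.2
  obtain ⟨M₂, hM₂⟩ := hu2.2
  have hy₁ : dirOp ρ H1 e1 = e2 - u2 := by rw [hloop2, add_sub_cancel_left]
  have hy₂ : fbOp ρ H2 e2 = u1 - e1 := by rw [hloop1, sub_sub_cancel]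
  set K := passivityBound δ1 δ2 β1' β2' (max M₁ M₂) g β
  have he₁K : ∀ T, normT T e1 ≤ K := fun T =>
    normT_le_passivityBound hu1.1 hu2.1 he1 he2 hδ ((hM₁ T).trans (le_max_left _ _))
      ((hM₂ T).trans (le_max_right _ _)) hloop1 hloop2 (hgain e1 he1 T)
      (hpass1 e1 he1 T) (hpass2 e2 he2 T)
  have hmem₁ : memS e1 := ⟨he1, K, he₁K⟩
  have hmemy₁ : memS (dirOp ρ H1 e1) :=
    ⟨hy₁ ▸ he2.sub hu2.1, g * K + β, fun T => (hgain e1 he1 T).trans (by gcongr; exact he₁K T)⟩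
  exact ⟨hmem₁, hloop2 ▸ hu2.add hmemy₁, hmemy₁, hy₂ ▸ hu1.sub hmem₁⟩

/-- (Generalized passivity theorem with offsets, Theorem 1 of the paper) Assume
`γ(ρ⁻¹∘H₁∘ρ) < ∞` and there are constants `δ₁, δ₂, β₁', β₂'` with `δ₁ + δ₂ > 0` such
that `⟨x,(ρ⁻¹∘H₁∘ρ)x⟩_T ≥ δ₁‖x‖_T² + β₁'` and
`⟨x,(ρ∘H₂∘ρ⁻¹)x⟩_T ≥ δ₂‖(ρ∘H₂∘ρ⁻¹)x‖_T² + β₂'` for all `x ∈ S_e^n`, `T`. Then for the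
well-posed feedback loop with inputs `u₁, u₂ ∈ S^n`, the internal signals
`e₁, e₂, y₁, y₂` all belong to `S^n`. -/
theorem stmt11 (ρ : ℝ) (hρ : 0 < ρ) (H1 H2 : (ℤ → E) → (ℤ → E))
    (δ1 δ2 β1' β2' : ℝ) (hδ : 0 < δ1 + δ2)
    (hg1 : (gainSetB (dirOp ρ H1)).Nonempty)
    (hpass1 : ∀ x, SeP x → ∀ T : ℤ,
      innerT T x (dirOp ρ H1 x) ≥ δ1 * normT T x ^ 2 + β1')
    (hpass2 : ∀ x, SeP x → ∀ T : ℤ,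
      innerT T x (fbOp ρ H2 x) ≥ δ2 * normT T (fbOp ρ H2 x) ^ 2 + β2')
    (u1 u2 e1 e2 : ℤ → E)
    (hu1 : memS u1) (hu2 : memS u2) (he1 : SeP e1) (he2 : SeP e2)
    (hloop1 : e1 = u1 - fbOp ρ H2 e2) (hloop2 : e2 = u2 + dirOp ρ H1 e1) :
    memS e1 ∧ memS e2 ∧ memS (dirOp ρ H1 e1) ∧ memS (fbOp ρ H2 e2) :=
  stmt11_general ρ H1 H2 δ1 δ2 β1' β2' hδ hg1 hpass1 hpass2 u1 u2 e1 e2 hu1 hu2 he1 he2 hloop1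
    hloop2
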